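/- arXiv:math/0307152 — 3 statements merged into one kernel-verified Lean document; each statement's English description precedes it below -/
import Mathlib

section
/- Let H be a real Hilbert space with orthonormal basis (φ_γ)_{γ∈Γ}, let p ∈ [1,2], and let w = (w_γ)_{γ∈Γ} be a sequence of weights with w_γ ≥ c for some c > 0. Let a ∈ H and let (vⁿ)_{n∈ℕ} be a sequence in H such that vⁿ converges weakly to 0 and ‖S_{w,p}(a + vⁿ) − S_{w,p}(a) − vⁿ‖ → 0 as n → ∞. Then ‖vⁿ‖ → 0 as n → ∞, i.e. the vⁿ converge to 0 strongly. -/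
open scoped ENNReal
open Filter

noncomputable def scalarF (w p : ℝ) (x : ℝ) : ℝ :=
  x + w * p / 2 * (Real.sign x * |x| ^ (p - 1))

noncomputable def scalarS (w p : ℝ) : ℝ → ℝ :=
  if p = 1 then
    fun x => if w / 2 ≤ x then x - w / 2 else if x ≤ -(w / 2) then x + w / 2 else 0
  else Function.invFun (scalarF w p)

noncomputable def shrinkOp {H : Type*} [NormedAddCommGroup H] [InnerProductSpace ℝ H]
    {Γ : Type*} (b : HilbertBasis Γ ℝ H) (w : Γ → ℝ) (p : ℝ) (h : H) : H :=
  ∑' γ, scalarS (w γ) p (b.repr h γ) • b γ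

noncomputable def Phi {H H' : Type*} [NormedAddCommGroup H] [InnerProductSpace ℝ H]
    [NormedAddCommGroup H'] [InnerProductSpace ℝ H']
    {Γ : Type*} (K : H →L[ℝ] H') (g : H') (b : HilbertBasis Γ ℝ H)
    (w : Γ → ℝ) (p : ℝ) (f : H) : ℝ≥0∞ :=
  ENNReal.ofReal (‖K f - g‖ ^ 2) + ∑' γ, ENNReal.ofReal (w γ * |b.repr f γ| ^ p)


lemma gval_nonneg {q : ℝ} (hq : 0 < q) {x : ℝ} (hx : 0 ≤ x) :
    Real.sign x * |x| ^ q = x ^ q := by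
  rcases eq_or_lt_of_le hx with h | h
  · simp [← h, Real.sign_zero, Real.zero_rpow hq.ne']
  · rw [Real.sign_of_pos h, abs_of_pos h, one_mul]

lemma gval_nonpos {q : ℝ} (hq : 0 < q) {x : ℝ} (hx : x ≤ 0) :
    Real.sign x * |x| ^ q = -((-x) ^ q) := by
  have h := gval_nonneg hq (neg_nonneg.mpr hx)
  rw [Real.sign_neg, abs_neg] at h
  linarith

lemma g_nonneg {q : ℝ} (hq : 0 < q) {x : ℝ} (hx : 0 ≤ x) :
    0 ≤ Real.sign x * |x| ^ q := by
  rw [gval_nonneg hq hx]; exact Real.rpow_nonneg hx q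

lemma g_mono {q : ℝ} (hq : 0 < q) : Monotone (fun x : ℝ => Real.sign x * |x| ^ q) := by
  intro t s hts
  dsimp only
  rcases le_total 0 t with h0 | h0
  · rw [gval_nonneg hq h0, gval_nonneg hq (h0.trans hts)]
    exact Real.rpow_le_rpow h0 hts hq.le
  · rcases le_total 0 s with h1 | h1
    · exact le_trans (by rw [gval_nonpos hq h0]; exact neg_nonpos.mpr (Real.rpow_nonneg (by linarith) q)) (g_nonneg hq h1)
    · rw [gval_nonpos hq h0, gval_nonpos hq h1]
      have : (-s) ^ q ≤ (-t) ^ q :=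
        Real.rpow_le_rpow (by linarith) (by linarith) hq.le
      linarith

lemma rpow_sub_rpow_ge {q : ℝ} (hq : 0 < q) (hq1 : q ≤ 1) {R t s : ℝ} (hR : 0 < R)
    (ht : 0 ≤ t) (hts : t ≤ s) (hs : s ≤ R) :
    q * R ^ (q - 1) * (s - t) ≤ s ^ q - t ^ q := by
  set κ := q * R ^ (q - 1) with hκ
  have hmono : MonotoneOn (fun x : ℝ => x ^ q - κ * x) (Set.Icc 0 R) := by
    apply monotoneOn_of_deriv_nonneg (convex_Icc 0 R)
    · apply ContinuousOn.sub
      · exact fun x _ => (Real.continuousAt_rpow_const x q (Or.inr hq.le)).continuousWithinAt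
      · exact (continuous_const.mul continuous_id).continuousOn
    · rw [interior_Icc]
      intro x hx
      exact ((Real.hasDerivAt_rpow_const (Or.inl hx.1.ne')).sub
        ((hasDerivAt_id x).const_mul κ)).differentiableAt.differentiableWithinAt
    · rw [interior_Icc]
      intro x hx
      have hd : HasDerivAt (fun x : ℝ => x ^ q - κ * x) (q * x ^ (q - 1) - κ * 1) x :=
        (Real.hasDerivAt_rpow_const (Or.inl (ne_of_gt hx.1))).sub ((hasDerivAt_id x).const_mul κ)
      rw [hd.deriv]
      have h1 : R ^ (q - 1) ≤ x ^ (q - 1) :=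
        Real.rpow_le_rpow_of_nonpos hx.1 hx.2.le (by linarith)
      have := mul_le_mul_of_nonneg_left h1 hq.le
      rw [hκ]; linarith
  have h := hmono (Set.mem_Icc.mpr ⟨ht, hts.trans hs⟩) (Set.mem_Icc.mpr ⟨ht.trans hts, hs⟩) hts
  dsimp at h
  linarith

lemma rpow_ge_linear {q : ℝ} (hq : 0 < q) (hq1 : q ≤ 1) {R x : ℝ} (hR : 0 < R)
    (hx : 0 ≤ x) (hxR : x ≤ R) : q * R ^ (q - 1) * x ≤ x ^ q := by
  have := rpow_sub_rpow_ge hq hq1 hR le_rfl hx hxR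
  simpa [Real.zero_rpow hq.ne'] using this

lemma g_increment {q : ℝ} (hq : 0 < q) (hq1 : q ≤ 1) {R t s : ℝ} (hR : 0 < R)
    (hts : t ≤ s) (hs : |s| ≤ R) (ht : |t| ≤ R) :
    q * R ^ (q - 1) * (s - t) ≤ Real.sign s * |s| ^ q - Real.sign t * |t| ^ q := by
  rcases le_total 0 t with h0 | h0
  · rw [gval_nonneg hq (h0.trans hts), gval_nonneg hq h0]
    exact rpow_sub_rpow_ge hq hq1 hR h0 hts (le_of_abs_le hs)
  · rcases le_total 0 s with h1 | h1
    · rw [gval_nonneg hq h1, gval_nonpos hq h0]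
      have e1 : q * R ^ (q - 1) * s ≤ s ^ q := rpow_ge_linear hq hq1 hR h1 (le_of_abs_le hs)
      have e2 : q * R ^ (q - 1) * (-t) ≤ (-t) ^ q := by
        refine rpow_ge_linear hq hq1 hR (by linarith) ?_
        rw [abs_of_nonpos h0] at ht; exact ht
      linarith
    · rw [gval_nonpos hq h0, gval_nonpos hq h1]
      have h2 := rpow_sub_rpow_ge hq hq1 hR (neg_nonneg.2 h1) (by linarith : -s ≤ -t)
        (by rw [abs_of_nonpos h0] at ht; exact ht)
      linarith

lemma g_continuous {q : ℝ} (hq : 0 < q) :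
    Continuous (fun x : ℝ => Real.sign x * |x| ^ q) := by
  have habs : Continuous (fun y : ℝ => |y| ^ q) :=
    continuous_iff_continuousAt.2 fun y =>
      (Real.continuousAt_rpow_const _ q (Or.inr hq.le)).comp continuous_abs.continuousAt
  rw [continuous_iff_continuousAt]
  intro x
  rcases lt_trichotomy x 0 with hx | hx | hx
  · have hev : (fun y : ℝ => -(|y| ^ q)) =ᶠ[nhds x] (fun y : ℝ => Real.sign y * |y| ^ q) := by
      filter_upwards [Iio_mem_nhds hx] with y hy
      rw [Real.sign_of_neg hy]; ring
    exact (habs.continuousAt.neg).congr hev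
  · subst hx
    have h0 : Real.sign (0:ℝ) * |(0:ℝ)| ^ q = 0 := by simp [Real.sign_zero]
    show Tendsto (fun y : ℝ => Real.sign y * |y| ^ q) (nhds 0) (nhds (Real.sign (0:ℝ) * |(0:ℝ)| ^ q))
    rw [h0]
    apply squeeze_zero_norm (a := fun y : ℝ => |y| ^ q)
    · intro y
      have hs : |Real.sign y| ≤ 1 := by
        rcases Real.sign_apply_eq y with h | h | h <;> simp [h]
      have h1 : (0:ℝ) ≤ |y| ^ q := Real.rpow_nonneg (abs_nonneg _) _
      calc ‖Real.sign y * |y| ^ q‖ = |Real.sign y| * |(|y| ^ q)| := abs_mul _ _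
        _ ≤ 1 * (|y| ^ q) := by
            rw [abs_of_nonneg h1]
            exact mul_le_mul_of_nonneg_right hs h1
        _ = |y| ^ q := one_mul _
    · have := habs.tendsto (0:ℝ)
      simpa [Real.zero_rpow hq.ne'] using this
  · have hev : (fun y : ℝ => |y| ^ q) =ᶠ[nhds x] (fun y : ℝ => Real.sign y * |y| ^ q) := by
      filter_upwards [Ioi_mem_nhds hx] with y hy
      rw [Real.sign_of_pos hy]; ring
    exact habs.continuousAt.congr hev

section Fprops
variable {w p : ℝ} (hp : 1 < p) (hw : 0 < w)
include hp hw

lemma F_strictMono : StrictMono (scalarF w p) := by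
  intro x y hxy
  have hg := g_mono (q := p - 1) (by linarith) hxy.le
  have hwp : (0:ℝ) ≤ w * p / 2 := by positivity
  have := mul_le_mul_of_nonneg_left hg hwp
  unfold scalarF
  dsimp only at this ⊢
  linarith

lemma F_surjective : Function.Surjective (scalarF w p) := by
  have hcont : Continuous (scalarF w p) :=
    continuous_id.add (continuous_const.mul (g_continuous (by linarith)))
  have hwp : (0:ℝ) ≤ w * p / 2 := by positivity
  apply hcont.surjective
  · refine tendsto_atTop_mono' atTop ?_ tendsto_id
    filter_upwards [eventually_ge_atTop (0:ℝ)] with x hx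
    have := g_nonneg (q := p - 1) (by linarith) hx
    have h2 := mul_nonneg hwp this
    show id x ≤ scalarF w p x
    unfold scalarF; dsimp; linarith [mul_nonneg hwp this]
  · refine tendsto_atBot_mono' atBot ?_ tendsto_id
    filter_upwards [eventually_le_atBot (0:ℝ)] with x hx
    have h1 : Real.sign x * |x| ^ (p-1) ≤ 0 := by
      rw [gval_nonpos (by linarith : (0:ℝ) < p - 1) hx]
      exact neg_nonpos.mpr (Real.rpow_nonneg (by linarith) _)
    show scalarF w p x ≤ id x
    unfold scalarF; dsimp; linarith [mul_nonpos_of_nonneg_of_nonpos hwp h1]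

lemma F_S (z : ℝ) : scalarF w p (scalarS w p z) = z := by
  rw [scalarS, if_neg (by linarith : p ≠ 1)]
  exact Function.rightInverse_invFun (F_surjective hp hw) z

lemma scalarS_abs_le (z : ℝ) : |scalarS w p z| ≤ |z| := by
  set s := scalarS w p z with hs
  have hz : z = s + w * p / 2 * (Real.sign s * |s| ^ (p - 1)) := (F_S hp hw z).symm
  have hwp : (0:ℝ) ≤ w * p / 2 := by positivity
  rcases le_total 0 s with h | h
  · have := g_nonneg (q := p - 1) (by linarith) h
    rw [abs_of_nonneg h, abs_of_nonneg (by nlinarith : (0:ℝ) ≤ z)]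
    nlinarith
  · have h1 : Real.sign s * |s| ^ (p-1) ≤ 0 := by
      rw [gval_nonpos (by linarith : (0:ℝ) < p - 1) h]
      exact neg_nonpos.mpr (Real.rpow_nonneg (by linarith) _)
    rw [abs_of_nonpos h, abs_of_nonpos (by nlinarith : z ≤ 0)]
    nlinarith

end Fprops

-- auxiliary: ordered version
lemma scalar_key_aux {w p c R : ℝ} (hp : 1 < p) (hp2 : p ≤ 2) (hc : 0 < c) (hcw : c ≤ w)
    (hR : 1 ≤ R) {x y : ℝ} (hx : |x| ≤ R) (hy : |y| ≤ R)
    (hord : scalarS w p y ≤ scalarS w p x) :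
    (c / 2 * ((p - 1) * R ^ (p - 1 - 1))) / (1 + c / 2 * ((p - 1) * R ^ (p - 1 - 1))) * |x - y|
      ≤ |scalarS w p x - scalarS w p y - (x - y)| := by
  have hw : 0 < w := lt_of_lt_of_le hc hcw
  set s := scalarS w p x with hsdef
  set t := scalarS w p y with htdef
  set κ := (p - 1) * R ^ (p - 1 - 1) with hκ
  set lam := c / 2 * κ with hlam
  have hκpos : 0 < κ :=
    mul_pos (by linarith) (Real.rpow_pos_of_pos (by linarith) _)
  have hlampos : 0 < lam := by rw [hlam]; positivity
  have hs : |s| ≤ R := le_trans (scalarS_abs_le hp hw x) hx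
  have ht : |t| ≤ R := le_trans (scalarS_abs_le hp hw y) hy
  have hxe : x = s + w * p / 2 * (Real.sign s * |s| ^ (p - 1)) := (F_S hp hw x).symm
  have hye : y = t + w * p / 2 * (Real.sign t * |t| ^ (p - 1)) := (F_S hp hw y).symm
  have hginc : κ * (s - t) ≤ Real.sign s * |s| ^ (p-1) - Real.sign t * |t| ^ (p-1) :=
    g_increment (by linarith) (by linarith) (by linarith : (0:ℝ) < R) hord hs ht
  have hA : c / 2 ≤ w * p / 2 := by nlinarith
  have hgd : 0 ≤ Real.sign s * |s| ^ (p-1) - Real.sign t * |t| ^ (p-1) :=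
    le_trans (mul_nonneg hκpos.le (sub_nonneg.2 hord)) hginc
  have hD : x - y - (s - t)
      = w * p / 2 * (Real.sign s * |s| ^ (p-1) - Real.sign t * |t| ^ (p-1)) := by
    rw [hxe, hye]; ring
  have hDlow : lam * (s - t) ≤ x - y - (s - t) := by
    rw [hD, hlam]
    calc c / 2 * κ * (s - t)
        = c / 2 * (κ * (s - t)) := by ring
      _ ≤ c / 2 * (Real.sign s * |s| ^ (p-1) - Real.sign t * |t| ^ (p-1)) :=
          mul_le_mul_of_nonneg_left hginc (by linarith)
      _ ≤ w * p / 2 * (Real.sign s * |s| ^ (p-1) - Real.sign t * |t| ^ (p-1)) :=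
          mul_le_mul_of_nonneg_right hA hgd
  have hDpos : 0 ≤ x - y - (s - t) := by
    rw [hD]
    exact mul_nonneg (by positivity) hgd
  have hst : 0 ≤ s - t := sub_nonneg.2 hord
  have hxy : 0 ≤ x - y := by linarith
  have habs1 : |x - y| = x - y := abs_of_nonneg hxy
  have habs2 : |s - t - (x - y)| = x - y - (s - t) := by
    rw [abs_sub_comm]; exact abs_of_nonneg hDpos
  rw [habs1, habs2]
  rw [div_mul_eq_mul_div, div_le_iff₀ (by linarith)]
  nlinarith [hDlow]

lemma scalar_key {w p c R : ℝ} (hp : 1 < p) (hp2 : p ≤ 2) (hc : 0 < c) (hcw : c ≤ w)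
    (hR : 1 ≤ R) {x y : ℝ} (hx : |x| ≤ R) (hy : |y| ≤ R) :
    (c / 2 * ((p - 1) * R ^ (p - 1 - 1))) / (1 + c / 2 * ((p - 1) * R ^ (p - 1 - 1))) * |x - y|
      ≤ |scalarS w p x - scalarS w p y - (x - y)| := by
  rcases le_total (scalarS w p y) (scalarS w p x) with h | h
  · exact scalar_key_aux hp hp2 hc hcw hR hx hy h
  · have h2 := scalar_key_aux hp hp2 hc hcw hR hy hx h
    rw [show scalarS w p x - scalarS w p y - (x - y)
      = -(scalarS w p y - scalarS w p x - (y - x)) by ring, abs_neg, abs_sub_comm x y]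
    exact h2

-- p = 1 lemmas
lemma scalarS_one (w x : ℝ) :
    scalarS w 1 x = if w / 2 ≤ x then x - w / 2 else if x ≤ -(w / 2) then x + w / 2 else 0 := by
  rw [scalarS, if_pos rfl]

lemma scalarS_one_abs_le {w : ℝ} (hw : 0 ≤ w) (z : ℝ) : |scalarS w 1 z| ≤ |z| := by
  rw [scalarS_one]
  split_ifs with h1 h2
  · rw [abs_of_nonneg (by linarith), abs_of_nonneg (by linarith)]; linarith
  · rw [abs_of_nonpos (by linarith), abs_of_nonpos (by linarith)]; linarith
  · simp [abs_nonneg]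

lemma scalarS_one_key {w c aa : ℝ} (hc : 0 < c) (hcw : c ≤ w) (ha : |aa| ≤ c / 16) (t : ℝ) :
    min |t| (c / 8) ≤ |scalarS w 1 (aa + t) - scalarS w 1 aa - t| := by
  obtain ⟨haa1, haa2⟩ := abs_le.mp ha
  have hsa : scalarS w 1 aa = 0 := by
    rw [scalarS_one, if_neg (by linarith), if_neg (by linarith)]
  rw [hsa, sub_zero]
  rcases le_or_gt |t| (c / 4) with hts | hts
  · obtain ⟨htt1, htt2⟩ := abs_le.mp hts
    have hsx : scalarS w 1 (aa + t) = 0 := by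
      rw [scalarS_one, if_neg (by linarith), if_neg (by linarith)]
    rw [hsx]
    calc min |t| (c / 8) ≤ |t| := min_le_left _ _
      _ = |0 - t| := by rw [zero_sub, abs_neg]
  · have key : min |aa + t| (w / 2) ≤ |aa + t - scalarS w 1 (aa + t)| := by
      rw [scalarS_one]
      split_ifs with h1 h2
      · rw [show aa + t - (aa + t - w / 2) = w / 2 by ring,
          abs_of_nonneg (show (0:ℝ) ≤ w / 2 by linarith)]
        exact min_le_right _ _
      · rw [show aa + t - (aa + t + w / 2) = -(w / 2) by ring, abs_neg,
          abs_of_nonneg (show (0:ℝ) ≤ w / 2 by linarith)]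
        exact min_le_right _ _
      · rw [sub_zero]; exact min_le_left _ _
    have h1 : c / 4 - c / 16 ≤ |aa + t| := by
      have h4 := abs_sub_abs_le_abs_sub t (-aa)
      rw [abs_neg, sub_neg_eq_add] at h4
      calc c / 4 - c / 16 ≤ |t| - |aa| := by linarith
        _ ≤ |t + aa| := h4
        _ = |aa + t| := by rw [add_comm]
    have hmin : c / 8 + c / 16 ≤ min |aa + t| (w / 2) := le_min (by linarith) (by linarith)
    have h2 : |scalarS w 1 (aa + t) - t| = |(aa + t - scalarS w 1 (aa + t)) - aa| := by
      rw [abs_sub_comm]; congr 1; ring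
    have h3 : |aa + t - scalarS w 1 (aa + t)| - |aa| ≤ |(aa + t - scalarS w 1 (aa + t)) - aa| :=
      abs_sub_abs_le_abs_sub _ _
    calc min |t| (c / 8) ≤ c / 8 := min_le_right _ _
      _ ≤ |(aa + t - scalarS w 1 (aa + t)) - aa| := by linarith
      _ = |scalarS w 1 (aa + t) - t| := h2.symm

set_option maxHeartbeats 1000000 in
/-- Key lemma for strong convergence: if `vⁿ ⇀ 0` weakly and
`‖S_{w,p}(a + vⁿ) − S_{w,p}(a) − vⁿ‖ → 0`, then `‖vⁿ‖ → 0`. -/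
theorem weak_plus_shrinkage_defect_implies_strong
    {H : Type*} [NormedAddCommGroup H] [InnerProductSpace ℝ H]
    {Γ : Type*} (b : HilbertBasis Γ ℝ H)
    (p : ℝ) (hp1 : 1 ≤ p) (hp2 : p ≤ 2)
    (w : Γ → ℝ) (c : ℝ) (hc : 0 < c) (hw : ∀ γ, c ≤ w γ)
    (a : H) (v : ℕ → H)
    (hweak : ∀ x : H, Tendsto (fun n => (inner ℝ (v n) x : ℝ)) atTop (nhds 0))
    (hdef : Tendsto (fun n => ‖shrinkOp b w p (a + v n) - shrinkOp b w p a - v n‖)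
      atTop (nhds 0)) :
    Tendsto (fun n => ‖v n‖) atTop (nhds 0) := by
  classical
  have hcomp : CompleteSpace H := b.repr.toIsometryEquiv.completeSpace
  -- generic conversions
  have h2pos : (0:ℝ) < (2:ℝ≥0∞).toReal := by norm_num
  have hconv : ∀ u : Γ → ℝ, (fun γ => ‖u γ‖ ^ (2:ℝ≥0∞).toReal) = fun γ => (u γ)^2 := by
    intro u; funext γ
    rw [show ((2:ℝ≥0∞).toReal) = ((2:ℕ):ℝ) by norm_num, Real.rpow_natCast]
    simp [Real.norm_eq_abs, sq_abs]
  have hsummable : ∀ x : H, Summable (fun γ => (b.repr x γ)^2) := by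
    intro x
    have h := (lp.memℓp (b.repr x)).summable h2pos
    rwa [hconv (fun γ => b.repr x γ)] at h
  have hnormsq : ∀ x : H, ‖x‖^2 = ∑' γ, (b.repr x γ)^2 := by
    intro x
    have h := lp.norm_rpow_eq_tsum h2pos (b.repr x)
    rw [hconv (fun γ => b.repr x γ)] at h
    rw [show ((2:ℝ≥0∞).toReal) = ((2:ℕ):ℝ) by norm_num, Real.rpow_natCast] at h
    rw [← h, b.repr.norm_map x]
  have hptbd : ∀ (x : H) (γ : Γ), |b.repr x γ| ≤ ‖x‖ := by
    intro x γ
    rw [b.repr_apply_apply]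
    calc |(inner ℝ (b γ) x : ℝ)| ≤ ‖b γ‖ * ‖x‖ := abs_real_inner_le_norm _ _
      _ = ‖x‖ := by simp [b.orthonormal.1 γ]
  -- |S z| ≤ |z|
  have habs : ∀ (γ : Γ) (z : ℝ), |scalarS (w γ) p z| ≤ |z| := by
    intro γ z
    rcases eq_or_lt_of_le hp1 with hpe | hpgt
    · rw [← hpe]; exact scalarS_one_abs_le (hc.trans_le (hw γ)).le z
    · exact scalarS_abs_le hpgt (hc.trans_le (hw γ)) z
  -- repr of shrinkOp
  have hrepr : ∀ (h : H) (γ : Γ), b.repr (shrinkOp b w p h) γ = scalarS (w γ) p (b.repr h γ) := by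
    intro h
    have hf : Memℓp (fun γ => scalarS (w γ) p (b.repr h γ)) 2 := by
      apply memℓp_gen
      rw [hconv (fun γ => scalarS (w γ) p (b.repr h γ))]
      apply Summable.of_nonneg_of_le (fun γ => sq_nonneg _) (fun γ => ?_) (hsummable h)
      calc (scalarS (w γ) p (b.repr h γ))^2 = |scalarS (w γ) p (b.repr h γ)|^2 := (sq_abs _).symm
        _ ≤ |b.repr h γ|^2 := pow_le_pow_left₀ (abs_nonneg _) (habs γ _) 2
        _ = (b.repr h γ)^2 := sq_abs _
    have hs : shrinkOp b w p h = b.repr.symm ⟨_, hf⟩ := (b.hasSum_repr_symm ⟨_, hf⟩).tsum_eq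
    intro γ
    rw [hs, b.repr.apply_symm_apply]
  set d : ℕ → H := fun n => shrinkOp b w p (a + v n) - shrinkOp b w p a - v n with hd
  have hdrepr : ∀ n γ, b.repr (d n) γ
      = scalarS (w γ) p (b.repr a γ + b.repr (v n) γ) - scalarS (w γ) p (b.repr a γ)
        - b.repr (v n) γ := by
    intro n γ
    have e1 : b.repr (a + v n) γ = b.repr a γ + b.repr (v n) γ := by
      rw [map_add]; simp
    rw [show d n = shrinkOp b w p (a + v n) - shrinkOp b w p a - v n from rfl, map_sub, map_sub]
    simp only [lp.coeFn_sub, Pi.sub_apply]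
    rw [hrepr, hrepr, e1]
  -- boundedness of v
  obtain ⟨B, hB⟩ : ∃ B, ∀ n, ‖v n‖ ≤ B := by
    have hb : ∀ x : H, ∃ C, ∀ n, ‖(innerSL ℝ (v n)) x‖ ≤ C := by
      intro x
      have ht : Tendsto (fun n => ‖(inner ℝ (v n) x : ℝ)‖) atTop (nhds 0) := by
        simpa using (hweak x).norm
      obtain ⟨C, hC⟩ := ht.bddAbove_range
      exact ⟨C, fun n => hC ⟨n, rfl⟩⟩
    obtain ⟨B, hB0⟩ := banach_steinhaus hb
    refine ⟨B, fun n => ?_⟩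
    have := hB0 n
    rwa [innerSL_apply_norm] at this
  have hB0 : 0 ≤ B := le_trans (norm_nonneg _) (hB 0)
  -- conclusion helper
  have hconc : ∀ g : ℕ → ℝ, Tendsto g atTop (nhds 0) → (∀ᶠ n in atTop, ‖v n‖^2 ≤ g n) →
      Tendsto (fun n => ‖v n‖) atTop (nhds 0) := by
    intro g hg hle
    have h2 : Tendsto (fun n => ‖v n‖^2) atTop (nhds 0) :=
      squeeze_zero' (Eventually.of_forall fun n => sq_nonneg _) hle hg
    have h3 := h2.sqrt
    rw [Real.sqrt_zero] at h3
    exact h3.congr fun n => Real.sqrt_sq (norm_nonneg _)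
  have hvcomp : ∀ γ : Γ, Tendsto (fun n => b.repr (v n) γ) atTop (nhds 0) := by
    intro γ
    apply (hweak (b γ)).congr
    intro n
    rw [real_inner_comm, ← b.repr_apply_apply]
  have hd2 : Tendsto (fun n => ‖d n‖^2) atTop (nhds 0) := by
    simpa using hdef.pow 2
  rcases eq_or_lt_of_le hp1 with hpe | hpgt
  · -- p = 1
    subst hpe
    -- finite set of large coefficients of a
    have hfin : {γ : Γ | (c/16)^2 ≤ (b.repr a γ)^2}.Finite := by
      have hev : ∀ᶠ γ in cofinite, (b.repr a γ)^2 < (c/16)^2 :=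
        (hsummable a).tendsto_cofinite_zero.eventually_lt_const (by positivity)
      have := Filter.eventually_cofinite.mp hev
      convert this using 1
      ext γ; simp [not_lt]
    set s₀ : Finset Γ := hfin.toFinset with hs₀
    have hsmall : ∀ γ, γ ∉ s₀ → |b.repr a γ| ≤ c/16 := by
      intro γ hγ
      rw [hs₀, Set.Finite.mem_toFinset] at hγ
      simp only [Set.mem_setOf_eq, not_le] at hγ
      nlinarith [sq_abs (b.repr a γ), abs_nonneg (b.repr a γ)]
    have hev1 : ∀ᶠ n in atTop, ‖d n‖ < c/8 := hdef.eventually_lt_const (by positivity)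
    apply hconc (fun n => (∑ γ ∈ s₀, (b.repr (v n) γ)^2) + ‖d n‖^2)
    · have hsum : Tendsto (fun n => ∑ γ ∈ s₀, (b.repr (v n) γ)^2) atTop (nhds 0) := by
        have := tendsto_finset_sum s₀ (fun γ _ => by
          simpa using (hvcomp γ).pow 2)
        simpa using this
      simpa using hsum.add hd2
    · filter_upwards [hev1] with n hn
      have hcomp2 : ∀ γ, γ ∉ s₀ → (b.repr (v n) γ)^2 ≤ (b.repr (d n) γ)^2 := by
        intro γ hγ
        have hkey := scalarS_one_key hc (hw γ) (hsmall γ hγ) (b.repr (v n) γ)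
        rw [← hdrepr n γ] at hkey
        have hdb : |b.repr (d n) γ| ≤ ‖d n‖ := hptbd _ γ
        rcases le_total |b.repr (v n) γ| (c/8) with h | h
        · rw [min_eq_left h] at hkey
          calc (b.repr (v n) γ)^2 = |b.repr (v n) γ|^2 := (sq_abs _).symm
            _ ≤ |b.repr (d n) γ|^2 := pow_le_pow_left₀ (abs_nonneg _) hkey 2
            _ = (b.repr (d n) γ)^2 := sq_abs _
        · exfalso
          rw [min_eq_right h] at hkey
          linarith
      have hsplit := Summable.sum_add_tsum_compl (s := s₀) (hsummable (v n))
      rw [hnormsq (v n), ← hsplit]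
      have htail : ∑' (γ : ((s₀ : Set Γ)ᶜ : Set Γ)), (b.repr (v n) (γ:Γ))^2 ≤ ‖d n‖^2 := by
        rw [hnormsq (d n)]
        calc ∑' (γ : ((s₀ : Set Γ)ᶜ : Set Γ)), (b.repr (v n) (γ:Γ))^2
            ≤ ∑' (γ : ((s₀ : Set Γ)ᶜ : Set Γ)), (b.repr (d n) (γ:Γ))^2 := by
              apply Summable.tsum_le_tsum _ ((hsummable (v n)).subtype _) ((hsummable (d n)).subtype _)
              rintro ⟨γ, hγ⟩
              exact hcomp2 γ (by simpa using hγ)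
          _ ≤ ∑' γ, (b.repr (d n) γ)^2 :=
              Summable.tsum_subtype_le _ _ (fun γ => sq_nonneg _) (hsummable (d n))
      linarith
  · -- p > 1
    set R : ℝ := ‖a‖ + B + 1 with hR
    have hR1 : 1 ≤ R := by
      have := norm_nonneg a
      rw [hR]; linarith
    set lam : ℝ := c / 2 * ((p - 1) * R ^ (p - 1 - 1)) with hlam
    have hlampos : 0 < lam := by
      rw [hlam]
      have : (0:ℝ) < R ^ (p - 1 - 1) := Real.rpow_pos_of_pos (by linarith) _
      have h1 : (0:ℝ) < p - 1 := by linarith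
      positivity
    set δ : ℝ := lam / (1 + lam) with hδ
    have hδpos : 0 < δ := by rw [hδ]; positivity
    have hcompw : ∀ n γ, δ * |b.repr (v n) γ| ≤ |b.repr (d n) γ| := by
      intro n γ
      have hx : |b.repr a γ + b.repr (v n) γ| ≤ R := by
        have e1 : b.repr (a + v n) γ = b.repr a γ + b.repr (v n) γ := by
          rw [map_add]; simp
        rw [← e1]
        calc |b.repr (a + v n) γ| ≤ ‖a + v n‖ := hptbd _ γ
          _ ≤ ‖a‖ + ‖v n‖ := norm_add_le _ _
          _ ≤ R := by rw [hR]; linarith [hB n]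
      have hy : |b.repr a γ| ≤ R := by
        calc |b.repr a γ| ≤ ‖a‖ := hptbd _ γ
          _ ≤ R := by rw [hR]; linarith
      have h := scalar_key hpgt hp2 hc (hw γ) hR1 hx hy
      rw [add_sub_cancel_left] at h
      rw [hdrepr n γ]
      calc δ * |b.repr (v n) γ| ≤ |scalarS (w γ) p (b.repr a γ + b.repr (v n) γ)
          - scalarS (w γ) p (b.repr a γ) - b.repr (v n) γ| := h
        _ = _ := rfl
    apply hconc (fun n => ‖d n‖^2 / δ^2)
    · simpa using hd2.div_const (δ^2)
    · apply Eventually.of_forall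
      intro n
      rw [le_div_iff₀ (by positivity)]
      calc ‖v n‖^2 * δ^2 = δ^2 * ‖v n‖^2 := by ring
        _ = ∑' γ, δ^2 * (b.repr (v n) γ)^2 := by rw [hnormsq (v n), tsum_mul_left]
        _ ≤ ∑' γ, (b.repr (d n) γ)^2 := by
            apply Summable.tsum_le_tsum _ ((hsummable (v n)).mul_left _) (hsummable (d n))
            intro γ
            have h := hcompw n γ
            calc δ^2 * (b.repr (v n) γ)^2 = (δ * |b.repr (v n) γ|)^2 := by
                  rw [mul_pow, sq_abs]
              _ ≤ |b.repr (d n) γ|^2 := pow_le_pow_left₀ (by positivity) h 2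
              _ = (b.repr (d n) γ)^2 := sq_abs _
        _ = ‖d n‖^2 := (hnormsq (d n)).symm
end

section
/- Let p ∈ [1,2] and w ≥ 0. The scalar thresholding function S_{w,p} : ℝ → ℝ satisfies, for all x ∈ ℝ, |S_{w,p}(x) − x| ≤ (wp/2)·|x|^{p−1}. -/
open Set

section ScalarF

variable {w p : ℝ}

lemma scalarF_neg (x : ℝ) : scalarF w p (-x) = -scalarF w p x := by
  simp only [scalarF, Real.sign_neg, abs_neg]
  ring

lemma scalarF_of_nonneg (hp : 1 < p) {x : ℝ} (hx : 0 ≤ x) :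
    scalarF w p x = x + w * p / 2 * x ^ (p - 1) := by
  rcases hx.eq_or_lt with rfl | hx
  · simp [scalarF, Real.zero_rpow (sub_ne_zero.mpr hp.ne')]
  · rw [scalarF, Real.sign_of_pos hx, abs_of_pos hx, one_mul]

lemma le_scalarF_of_nonneg (hwp : 0 ≤ w * p) {x : ℝ} (hx : 0 ≤ x) : x ≤ scalarF w p x := by
  have hsign : 0 ≤ Real.sign x := by
    rcases hx.eq_or_lt with rfl | hx
    · rw [Real.sign_zero]
    · rw [Real.sign_of_pos hx]; exact zero_le_one
  have : 0 ≤ w * p / 2 * (Real.sign x * |x| ^ (p - 1)) := by positivity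
  rw [scalarF]
  linarith

lemma abs_le_abs_scalarF (hwp : 0 ≤ w * p) (x : ℝ) : |x| ≤ |scalarF w p x| := by
  rcases le_total 0 x with hx | hx
  · rw [abs_of_nonneg hx]
    exact (le_scalarF_of_nonneg hwp hx).trans (le_abs_self _)
  · calc |x| = -x := abs_of_nonpos hx
      _ ≤ scalarF w p (-x) := le_scalarF_of_nonneg hwp (neg_nonneg.mpr hx)
      _ = -scalarF w p x := scalarF_neg x
      _ ≤ |scalarF w p x| := neg_le_abs _

lemma abs_scalarF_sub_le (hwp : 0 ≤ w * p) (x : ℝ) :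
    |scalarF w p x - x| ≤ w * p / 2 * |x| ^ (p - 1) := by
  have hsign : |Real.sign x| ≤ 1 := by
    rcases Real.sign_apply_eq x with h | h | h <;> norm_num [h]
  have hpow : 0 ≤ |x| ^ (p - 1) := Real.rpow_nonneg (abs_nonneg x) _
  rw [scalarF, add_sub_cancel_left, abs_mul, abs_mul, abs_of_nonneg (by positivity : 0 ≤ w * p / 2),
    abs_of_nonneg hpow]
  gcongr
  exact mul_le_of_le_one_left hpow hsign

lemma exists_scalarF_eq_of_nonneg (hp : 1 < p) (hwp : 0 ≤ w * p) {x : ℝ} (hx : 0 ≤ x) :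
    ∃ y, scalarF w p y = x := by
  have hcont : ContinuousOn (fun y => y + w * p / 2 * y ^ (p - 1)) (Icc 0 x) :=
    (continuous_id.add (continuous_const.mul
      (Real.continuous_rpow_const (by linarith)))).continuousOn
  have hmem : x ∈ Icc (scalarF w p 0) (scalarF w p x) :=
    ⟨by simpa [scalarF] using hx, le_scalarF_of_nonneg hwp hx⟩
  rw [scalarF_of_nonneg hp le_rfl, scalarF_of_nonneg hp hx] at hmem
  obtain ⟨y, hy, hyx⟩ := intermediate_value_Icc hx hcont hmem
  exact ⟨y, (scalarF_of_nonneg hp hy.1).trans hyx⟩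

lemma scalarF_surjective (hp : 1 < p) (hwp : 0 ≤ w * p) : Function.Surjective (scalarF w p) := by
  intro x
  rcases le_total 0 x with hx | hx
  · exact exists_scalarF_eq_of_nonneg hp hwp hx
  · obtain ⟨y, hy⟩ := exists_scalarF_eq_of_nonneg hp hwp (neg_nonneg.mpr hx)
    exact ⟨-y, by rw [scalarF_neg, hy, neg_neg]⟩

lemma abs_invFun_scalarF_sub_le (hp : 1 < p) (hwp : 0 ≤ w * p) (x : ℝ) :
    |Function.invFun (scalarF w p) x - x| ≤ w * p / 2 * |x| ^ (p - 1) := by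
  set y := Function.invFun (scalarF w p) x
  have hy : scalarF w p y = x := Function.invFun_eq (scalarF_surjective hp hwp x)
  calc |y - x| = |scalarF w p y - y| := by rw [abs_sub_comm, hy]
    _ ≤ w * p / 2 * |y| ^ (p - 1) := abs_scalarF_sub_le hwp y
    _ ≤ w * p / 2 * |x| ^ (p - 1) := by
        have hyx : |y| ≤ |x| := hy ▸ abs_le_abs_scalarF hwp y
        gcongr

end ScalarF

lemma abs_scalarS_one_sub_le {w : ℝ} (hw : 0 ≤ w) (x : ℝ) : |scalarS w 1 x - x| ≤ w / 2 := by
  simp only [scalarS, if_true]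
  split_ifs with hpos hneg
  · rw [sub_sub_cancel_left, abs_neg, abs_of_nonneg (by linarith)]
  · rw [add_sub_cancel_left, abs_of_nonneg (by linarith)]
  · rw [zero_sub, abs_neg, abs_le]
    constructor <;> linarith

theorem scalar_shrinkage_close_to_identity_general
    (p : ℝ) (hp1 : 1 ≤ p) (w : ℝ) (hw : 0 ≤ w) :
    ∀ x : ℝ, |scalarS w p x - x| ≤ w * p / 2 * |x| ^ (p - 1) := by
  intro x
  rcases hp1.eq_or_lt with rfl | hp
  · simpa using abs_scalarS_one_sub_le hw x
  · rw [scalarS, if_neg hp.ne']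
    exact abs_invFun_scalarF_sub_le hp (by positivity) x

/-- The scalar thresholding function satisfies `|S_{w,p}(x) − x| ≤ (wp/2)·|x|^(p−1)`. -/
theorem scalar_shrinkage_close_to_identity
    (p : ℝ) (hp1 : 1 ≤ p) (hp2 : p ≤ 2) (w : ℝ) (hw : 0 ≤ w) :
    ∀ x : ℝ, |scalarS w p x - x| ≤ w * p / 2 * |x| ^ (p - 1) :=
  scalar_shrinkage_close_to_identity_general p hp1 w hw
end

section
/- Let H be a real Hilbert space with orthonormal basis (φ_γ)_{γ∈Γ}, let p ∈ [1,2], and let w = (w_γ)_{γ∈Γ} be a sequence of weights with w_γ ≥ c for some c > 0. Suppose (v_k)_{k∈ℕ} is a sequence in H converging weakly to v ∈ H, with |||v_k|||_{w,p} < ∞ for all k, |||v|||_{w,p} < ∞, and lim_{k→∞} |||v_k|||_{w,p} = |||v|||_{w,p}. Then (v_k)_{k∈ℕ} converges to v strongly: lim_{k→∞} ‖v − v_k‖ = 0. -/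
open Filter

section aux
variable {Γ : Type*}

lemma scheffe_aux {Γ : Type*} (C : ℝ) (hC : 0 ≤ C) (f : ℕ → Γ → ℝ) (g : Γ → ℝ) (h : ℕ → Γ → ℝ)
    (hf0 : ∀ k γ, 0 ≤ f k γ) (hg0 : ∀ γ, 0 ≤ g γ) (hh0 : ∀ k γ, 0 ≤ h k γ)
    (hle : ∀ k γ, h k γ ≤ C * (f k γ + g γ))
    (hfg : ∀ γ, Tendsto (fun k => f k γ) atTop (nhds (g γ)))
    (hh : ∀ γ, Tendsto (fun k => h k γ) atTop (nhds 0))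
    (hfs : ∀ k, Summable (f k)) (hgs : Summable g)
    (hsum : Tendsto (fun k => ∑' γ, f k γ) atTop (nhds (∑' γ, g γ))) :
    Tendsto (fun k => ∑' γ, h k γ) atTop (nhds 0) := by
  have hhs : ∀ k, Summable (h k) :=
    fun k => Summable.of_nonneg_of_le (hh0 k) (hle k) (((hfs k).add hgs).mul_left C)
  rw [Metric.tendsto_nhds]
  intro ε hε
  set δ : ℝ := ε / (2 * (1 + 3 * C)) with hδdef
  have hden : (0:ℝ) < 2 * (1 + 3 * C) := by positivity
  have hδ : 0 < δ := div_pos hε hden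
  -- choose finite set with small tail of g
  obtain ⟨F, hF⟩ : ∃ F : Finset Γ, ∑' γ : ↑(↑F : Set Γ)ᶜ, g γ < δ :=
    ((tendsto_order.1 (tendsto_tsum_compl_atTop_zero (f := g))).2 _ hδ).exists
  -- finite part of h tends to 0
  have h1 : Tendsto (fun k => ∑ γ ∈ F, h k γ) atTop (nhds 0) := by
    have := tendsto_finset_sum F (fun γ _ => hh γ)
    simpa using this
  -- tail of f tends to tail of g
  have h2 : Tendsto (fun k => ∑' γ : ↑(↑F : Set Γ)ᶜ, f k γ) atTop
      (nhds (∑' γ : ↑(↑F : Set Γ)ᶜ, g γ)) := by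
    have e1 : ∀ k, ∑' γ : ↑(↑F : Set Γ)ᶜ, f k γ = (∑' γ, f k γ) - ∑ γ ∈ F, f k γ := by
      intro k; rw [eq_sub_iff_add_eq, add_comm, Summable.sum_add_tsum_compl (hfs k)]
    have e2 : ∑' γ : ↑(↑F : Set Γ)ᶜ, g γ = (∑' γ, g γ) - ∑ γ ∈ F, g γ := by
      rw [eq_sub_iff_add_eq, add_comm, Summable.sum_add_tsum_compl hgs]
    simp only [e1, e2]
    exact hsum.sub (tendsto_finset_sum F (fun γ _ => hfg γ))
  have h2' : ∀ᶠ k in atTop, ∑' γ : ↑(↑F : Set Γ)ᶜ, f k γ < 2 * δ :=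
    (tendsto_order.1 h2).2 (2 * δ) (by linarith)
  have h1' : ∀ᶠ k in atTop, ∑ γ ∈ F, h k γ < δ :=
    (tendsto_order.1 h1).2 δ hδ
  filter_upwards [h1', h2'] with k hk1 hk2
  have htail : ∑' γ : ↑(↑F : Set Γ)ᶜ, h k γ ≤
      C * ((∑' γ : ↑(↑F : Set Γ)ᶜ, f k γ) + ∑' γ : ↑(↑F : Set Γ)ᶜ, g γ) := by
    have hsub : Summable fun γ : ↑(↑F : Set Γ)ᶜ => C * (f k γ + g γ) :=
      (((hfs k).subtype _).add (hgs.subtype _)).mul_left C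
    calc ∑' γ : ↑(↑F : Set Γ)ᶜ, h k γ
        ≤ ∑' γ : ↑(↑F : Set Γ)ᶜ, C * (f k (γ:Γ) + g γ) :=
          Summable.tsum_le_tsum (fun γ => hle k γ) ((hhs k).subtype _) hsub
      _ = C * ((∑' γ : ↑(↑F : Set Γ)ᶜ, f k γ) + ∑' γ : ↑(↑F : Set Γ)ᶜ, g γ) := by
          rw [tsum_mul_left]
          congr 1
          exact Summable.tsum_add ((hfs k).subtype _) (hgs.subtype _)
  have htotal : ∑' γ, h k γ = (∑ γ ∈ F, h k γ) + ∑' γ : ↑(↑F : Set Γ)ᶜ, h k γ :=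
    (Summable.sum_add_tsum_compl (hhs k)).symm
  have hnn : 0 ≤ ∑' γ, h k γ := tsum_nonneg (hh0 k)
  have hgtail_nn : 0 ≤ ∑' γ : ↑(↑F : Set Γ)ᶜ, g γ := tsum_nonneg (fun γ => hg0 γ)
  have hftail_nn : 0 ≤ ∑' γ : ↑(↑F : Set Γ)ᶜ, f k γ := tsum_nonneg (fun γ => hf0 k γ)
  have : ∑' γ, h k γ < ε := by
    have hb : ∑' γ, h k γ ≤ δ + C * (2 * δ + δ) := by
      rw [htotal]
      have := mul_le_mul_of_nonneg_left
        (add_le_add hk2.le hF.le) hC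
      nlinarith [htail]
    have : δ * (2 * (1 + 3 * C)) = ε := by
      rw [hδdef]; field_simp
    nlinarith
  rw [Real.dist_eq]
  rwa [sub_zero, abs_of_nonneg hnn]


lemma abs_sub_rpow_le (p : ℝ) (hp0 : 0 < p) (x y : ℝ) :
    |x - y| ^ p ≤ 2 ^ p * (|y| ^ p + |x| ^ p) := by
  have h1 : |x - y| ≤ 2 * max |x| |y| := by
    have hxy : |x - y| ≤ |x| + |y| := abs_sub x y
    rcases max_cases |x| |y| with ⟨h, h'⟩ | ⟨h, h'⟩ <;> rw [h] <;> linarith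
  have hmax : (0:ℝ) ≤ max |x| |y| := le_trans (abs_nonneg x) (le_max_left _ _)
  calc |x - y| ^ p ≤ (2 * max |x| |y|) ^ p :=
        Real.rpow_le_rpow (abs_nonneg _) h1 hp0.le
    _ = 2 ^ p * (max |x| |y|) ^ p := Real.mul_rpow (by norm_num) hmax
    _ ≤ 2 ^ p * (|y| ^ p + |x| ^ p) := by
        refine mul_le_mul_of_nonneg_left ?_ (Real.rpow_nonneg (by norm_num) p)
        rcases max_cases |x| |y| with ⟨h, _⟩ | ⟨h, _⟩ <;> rw [h]
        · exact le_add_of_nonneg_left (Real.rpow_nonneg (abs_nonneg _) p)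
        · exact le_add_of_nonneg_right (Real.rpow_nonneg (abs_nonneg _) p)

end aux

/-- If `v_k ⇀ v` weakly and the weighted `ℓᵖ` norms `|||v_k|||_{w,p}` converge to
`|||v|||_{w,p}`, then `v_k → v` strongly in the Hilbert norm. -/
theorem weak_convergence_with_norms_implies_strong
    {H : Type*} [NormedAddCommGroup H] [InnerProductSpace ℝ H]
    {Γ : Type*} (b : HilbertBasis Γ ℝ H)
    (p : ℝ) (hp1 : 1 ≤ p) (hp2 : p ≤ 2)
    (w : Γ → ℝ) (c : ℝ) (hc : 0 < c) (hw : ∀ γ, c ≤ w γ)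
    (v : ℕ → H) (vlim : H)
    (hweak : ∀ x : H,
      Tendsto (fun k => (inner ℝ (v k) x : ℝ)) atTop (nhds (inner ℝ vlim x)))
    (hsumk : ∀ k, Summable fun γ => w γ * |b.repr (v k) γ| ^ p)
    (hsum : Summable fun γ => w γ * |b.repr vlim γ| ^ p)
    (hnorm : Tendsto (fun k => (∑' γ, w γ * |b.repr (v k) γ| ^ p) ^ (1 / p)) atTop
      (nhds ((∑' γ, w γ * |b.repr vlim γ| ^ p) ^ (1 / p)))) :
    Tendsto (fun k => ‖vlim - v k‖) atTop (nhds 0) := by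
  have hp0 : 0 < p := lt_of_lt_of_le one_pos hp1
  have hpne : p ≠ 0 := hp0.ne'
  have hw0 : ∀ γ, 0 ≤ w γ := fun γ => le_trans hc.le (hw γ)
  -- pointwise convergence of coordinates
  have hpt : ∀ γ, Tendsto (fun k => b.repr (v k) γ) atTop (nhds (b.repr vlim γ)) := by
    intro γ
    simp only [b.repr_apply_apply]
    simpa [real_inner_comm] using hweak (b γ)
  -- notation
  set f : ℕ → Γ → ℝ := fun k γ => w γ * |b.repr (v k) γ| ^ p with hf
  set g : Γ → ℝ := fun γ => w γ * |b.repr vlim γ| ^ p with hg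
  set h : ℕ → Γ → ℝ := fun k γ => w γ * |b.repr vlim γ - b.repr (v k) γ| ^ p with hh
  have hf0 : ∀ k γ, 0 ≤ f k γ :=
    fun k γ => mul_nonneg (hw0 γ) (Real.rpow_nonneg (abs_nonneg _) p)
  have hg0 : ∀ γ, 0 ≤ g γ :=
    fun γ => mul_nonneg (hw0 γ) (Real.rpow_nonneg (abs_nonneg _) p)
  have hh0 : ∀ k γ, 0 ≤ h k γ :=
    fun k γ => mul_nonneg (hw0 γ) (Real.rpow_nonneg (abs_nonneg _) p)
  have hle : ∀ k γ, h k γ ≤ 2 ^ p * (f k γ + g γ) := by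
    intro k γ
    have := abs_sub_rpow_le p hp0 (b.repr vlim γ) (b.repr (v k) γ)
    have hwγ := hw0 γ
    calc h k γ ≤ w γ * (2 ^ p * (|b.repr (v k) γ| ^ p + |b.repr vlim γ| ^ p)) :=
          mul_le_mul_of_nonneg_left this hwγ
      _ = 2 ^ p * (f k γ + g γ) := by simp only [hf, hg]; ring
  -- pointwise convergences
  have hfg : ∀ γ, Tendsto (fun k => f k γ) atTop (nhds (g γ)) := by
    intro γ
    exact Tendsto.const_mul _
      ((Real.continuousAt_rpow_const _ p (Or.inr hp0.le)).tendsto.comp (hpt γ).abs)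
  have hhpt : ∀ γ, Tendsto (fun k => h k γ) atTop (nhds 0) := by
    intro γ
    have h1 : Tendsto (fun k => |b.repr vlim γ - b.repr (v k) γ|) atTop (nhds 0) := by
      have h0 : Tendsto (fun k => b.repr vlim γ - b.repr (v k) γ) atTop
          (nhds (b.repr vlim γ - b.repr vlim γ)) := tendsto_const_nhds.sub (hpt γ)
      rw [sub_self] at h0
      simpa [abs_zero] using h0.abs
    have h2 : Tendsto (fun k => |b.repr vlim γ - b.repr (v k) γ| ^ p) atTop (nhds 0) := by
      have := (Real.continuousAt_rpow_const 0 p (Or.inr hp0.le)).tendsto.comp h1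
      simpa [Function.comp_def, Real.zero_rpow hpne] using this
    simpa using h2.const_mul (w γ)
  -- summability of h
  have hhs : ∀ k, Summable (h k) :=
    fun k => Summable.of_nonneg_of_le (hh0 k) (hle k) (((hsumk k).add hsum).mul_left _)
  -- convergence of the sums of f to sum of g (raise hnorm to power p)
  have hSnn : ∀ k, (0:ℝ) ≤ ∑' γ, f k γ := fun k => tsum_nonneg (hf0 k)
  have hSnn' : (0:ℝ) ≤ ∑' γ, g γ := tsum_nonneg hg0
  have hsum' : Tendsto (fun k => ∑' γ, f k γ) atTop (nhds (∑' γ, g γ)) := by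
    have hcont := (Real.continuousAt_rpow_const ((∑' γ, g γ) ^ (1/p)) p
      (Or.inr hp0.le)).tendsto.comp hnorm
    have key : ∀ x : ℝ, 0 ≤ x → (x ^ (1/p)) ^ p = x := by
      intro x hx
      rw [← Real.rpow_mul hx, one_div, inv_mul_cancel₀ hpne, Real.rpow_one]
    have e1 : ∀ k, ((∑' γ, f k γ) ^ (1/p)) ^ p = ∑' γ, f k γ := fun k => key _ (hSnn k)
    have e2 : ((∑' γ, g γ) ^ (1/p)) ^ p = ∑' γ, g γ := key _ hSnn'
    have e1' : ∀ k, ((∑' γ, w γ * |b.repr (v k) γ| ^ p) ^ (1/p)) ^ p = ∑' γ, f k γ := e1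
    simpa only [Function.comp_def, e1', e2] using hcont
  -- Scheffé: tsum of h tends to 0
  have hT : Tendsto (fun k => ∑' γ, h k γ) atTop (nhds 0) :=
    scheffe_aux (2 ^ p) (Real.rpow_nonneg (by norm_num) p) f g h hf0 hg0 hh0 hle hfg hhpt
      hsumk hsum hsum'
  -- norm bound
  have hbound : ∀ k, ‖vlim - v k‖ ≤ ((∑' γ, h k γ) / c) ^ (1/p) := by
    intro k
    set u := vlim - v k with hu
    set S := ∑' γ, h k γ with hSdef
    have hS0 : 0 ≤ S := tsum_nonneg (hh0 k)
    set M : ℝ := (S / c) ^ (1/p) with hM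
    have hM0 : 0 ≤ M := Real.rpow_nonneg (div_nonneg hS0 hc.le) _
    have hd : ∀ γ, b.repr u γ = b.repr vlim γ - b.repr (v k) γ := by
      intro γ; rw [hu, map_sub]; simp
    have hdp : ∀ γ, |b.repr u γ| ^ p ≤ S / c := by
      intro γ
      have h1 : h k γ ≤ S := Summable.le_tsum (hhs k) γ (fun γ' _ => hh0 k γ')
      have h2 : c * |b.repr u γ| ^ p ≤ h k γ := by
        rw [hh, hd γ]
        exact mul_le_mul_of_nonneg_right (hw γ) (Real.rpow_nonneg (abs_nonneg _) p)
      rw [le_div_iff₀ hc]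
      nlinarith
    have hdM : ∀ γ, |b.repr u γ| ≤ M := by
      intro γ
      have h1 : (|b.repr u γ| ^ p) ^ (1/p) ≤ (S / c) ^ (1/p) :=
        Real.rpow_le_rpow (Real.rpow_nonneg (abs_nonneg _) p) (hdp γ) (by positivity)
      rwa [← Real.rpow_mul (abs_nonneg _), mul_one_div_cancel hpne, Real.rpow_one] at h1
    have hkey : ∀ γ, (b.repr u γ) ^ 2 ≤ (M ^ (2 - p) / c) * h k γ := by
      intro γ
      have e1 : (b.repr u γ) ^ 2 = |b.repr u γ| ^ (2 - p) * |b.repr u γ| ^ p := by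
        rw [← Real.rpow_add' (abs_nonneg _) (by norm_num)]
        norm_num [Real.rpow_two, sq_abs]
      have h1 : |b.repr u γ| ^ (2 - p) ≤ M ^ (2 - p) :=
        Real.rpow_le_rpow (abs_nonneg _) (hdM γ) (by linarith)
      have h2 : |b.repr u γ| ^ p ≤ h k γ / c := by
        rw [le_div_iff₀ hc, hh, hd γ, mul_comm]
        exact mul_le_mul_of_nonneg_right (hw γ) (Real.rpow_nonneg (abs_nonneg _) p)
      calc (b.repr u γ) ^ 2 = |b.repr u γ| ^ (2 - p) * |b.repr u γ| ^ p := e1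
        _ ≤ M ^ (2 - p) * (h k γ / c) :=
            mul_le_mul h1 h2 (Real.rpow_nonneg (abs_nonneg _) _)
              (Real.rpow_nonneg hM0 _)
        _ = (M ^ (2 - p) / c) * h k γ := by ring
    have hsq : HasSum (fun γ => (b.repr u γ) ^ 2) (‖u‖ ^ 2) := by
      have h0 := b.hasSum_inner_mul_inner u u
      simp only [← b.repr_apply_apply] at h0
      have : (inner ℝ u u : ℝ) = ‖u‖ ^ 2 := real_inner_self_eq_norm_sq u
      rw [this] at h0
      convert h0 using 2 with γ
      case e'_3 => rfl
      rw [real_inner_comm, ← b.repr_apply_apply, sq]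
    have hMsum : HasSum (fun γ => (M ^ (2 - p) / c) * h k γ) ((M ^ (2 - p) / c) * S) :=
      (hhs k).hasSum.mul_left _
    have hnorm2 : ‖u‖ ^ 2 ≤ (M ^ (2 - p) / c) * S := hasSum_le hkey hsq hMsum
    have hMp : M ^ p = S / c := by
      rw [hM, ← Real.rpow_mul (div_nonneg hS0 hc.le), one_div, inv_mul_cancel₀ hpne,
        Real.rpow_one]
    have hM2 : (M ^ (2 - p) / c) * S = M ^ 2 := by
      have : (M ^ (2 - p) / c) * S = M ^ (2 - p) * (S / c) := by ring
      rw [this, ← hMp, ← Real.rpow_add' hM0 (by norm_num)]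
      norm_num [Real.rpow_two]
    rw [hM2] at hnorm2
    calc ‖u‖ = Real.sqrt (‖u‖ ^ 2) := (Real.sqrt_sq (norm_nonneg u)).symm
      _ ≤ Real.sqrt (M ^ 2) := Real.sqrt_le_sqrt hnorm2
      _ = M := Real.sqrt_sq hM0
  -- squeeze
  have hB : Tendsto (fun k => ((∑' γ, h k γ) / c) ^ (1/p)) atTop (nhds 0) := by
    have h1 : Tendsto (fun k => (∑' γ, h k γ) / c) atTop (nhds 0) := by
      simpa using hT.div_const c
    have := (Real.continuousAt_rpow_const 0 (1/p) (Or.inr (by positivity))).tendsto.comp h1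
    simpa only [Function.comp_def, Real.zero_rpow (show (1:ℝ)/p ≠ 0 by positivity)] using this
  exact squeeze_zero (fun k => norm_nonneg _) hbound hB
end
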